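/- For 0 < q < 1, a complex number a, complex z, and integer n ≥ 0, the function f(n,a,z) = (q^{1-n};q)_∞ · ₁φ₁(a; q^{1-n}; q, z) satisfies the bound |f(n,a,z)| ≤ |z|^n q^{n(n-1)/2} (-q;q)_∞ (-|a|;q)_∞ (-|z|;q)_∞. -/

import Mathlib

open scoped BigOperators

/-- Finite q-shifted factorial `(a;q)_k` (complex). -/
noncomputable def qPoch (a q : ℂ) (k : ℕ) : ℂ := ∏ j ∈ Finset.range k, (1 - a * q ^ j)

/-- Infinite q-shifted factorial `(a;q)_∞` (complex). -/
noncomputable def qPochInf (a q : ℂ) : ℂ := ∏' j : ℕ, (1 - a * q ^ j)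

/-- Infinite q-shifted factorial `(a;q)_∞` (real). -/
noncomputable def rqPochInf (a q : ℝ) : ℝ := ∏' j : ℕ, (1 - a * q ^ j)

/-- `f(n,a,z) = (q^{1-n};q)_∞ ₁φ₁(a; q^{1-n}; q, z)`, via the regularized series. -/
noncomputable def regPhi11 (a : ℂ) (n : ℤ) (q : ℝ) (z : ℂ) : ℂ :=
  ∑' k : ℕ, qPoch a q k * qPochInf ((q : ℂ) ^ (1 - n + (k : ℤ))) q / qPoch q q k *
    (-1) ^ k * z ^ k * (q : ℂ) ^ (k * (k - 1) / 2)

open Finset Filter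

/-!
The factor `(q^{1-n+k};q)_∞` vanishes for `k < n`. For `k = n + m` it equals `(q^{m+1};q)_∞`,
which is at most `(q^{m+1};q)_n = (q;q)_{m+n} / (q;q)_m`; together with `|(a;q)_k| ≤ (-|a|;q)_∞`
and `q^{(m+n)(m+n-1)/2} ≤ q^{n(n-1)/2} q^{m(m-1)/2}`, the `(n+m)`-th term is bounded by
`|z|^n q^{n(n-1)/2} (-|a|;q)_∞` times `q^{m(m-1)/2} |z|^m / (q;q)_m`. These last numbers sum to
`(-|z|;q)_∞` by Euler's identity, of which only the upper bound is needed: the partial sums `G`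
satisfy `G(x) ≤ (1 + x) G(qx)`, and iterating gives `G(x) ≤ (-x;q)_k G(q^k x) → (-x;q)_∞`.
The factor `(-q;q)_∞` is at least `1`.
-/

lemma choose_two_add (m n : ℕ) : (m + n).choose 2 = m.choose 2 + n.choose 2 + m * n := by
  rw [Nat.add_choose_eq]
  simp [Nat.antidiagonal_succ]
  ring

lemma tprod_le_prod_range_of_le_one {f : ℕ → ℝ} (hf : Multipliable f) (h0 : ∀ j, 0 ≤ f j)
    (h1 : ∀ j, f j ≤ 1) (n : ℕ) : ∏' j, f j ≤ ∏ j ∈ range n, f j := by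
  refine Antitone.le_of_tendsto (antitone_nat_of_succ_le fun k => ?_) hf.hasProd.tendsto_prod_nat n
  rw [prod_range_succ]
  exact mul_le_of_le_one_right (prod_nonneg fun j _ => h0 j) (h1 k)

lemma prod_range_le_tprod_of_one_le {f : ℕ → ℝ} (hf : Multipliable f) (h1 : ∀ j, 1 ≤ f j)
    (n : ℕ) : ∏ j ∈ range n, f j ≤ ∏' j, f j := by
  refine Monotone.ge_of_tendsto (monotone_nat_of_le_succ fun k => ?_) hf.hasProd.tendsto_prod_nat n
  rw [prod_range_succ]
  exact le_mul_of_one_le_right (prod_nonneg fun j _ => zero_le_one.trans (h1 j)) (h1 k)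

lemma norm_tsum_le_of_nat_add {E : Type*} [NormedAddCommGroup E] [CompleteSpace E] {f : ℕ → E}
    {g : ℕ → ℝ} {s : ℝ} {n : ℕ} (hf : ∀ k < n, f k = 0) (hg : HasSum g s)
    (hfg : ∀ m, ‖f (m + n)‖ ≤ g m) : ‖∑' k, f k‖ ≤ s := by
  have hsum : Summable f := (summable_nat_add_iff n).1 (hg.summable.of_norm_bounded hfg)
  rw [← hsum.sum_add_tsum_nat_add n, sum_eq_zero fun k hk => hf k (mem_range.1 hk), zero_add]
  exact tsum_of_norm_bounded hg hfg

noncomputable def rqPoch (a q : ℝ) (k : ℕ) : ℝ := ∏ j ∈ range k, (1 - a * q ^ j)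

lemma rqPoch_add (a q : ℝ) (m n : ℕ) :
    rqPoch a q (m + n) = rqPoch a q m * rqPoch (a * q ^ m) q n := by
  simp only [rqPoch, prod_range_add, pow_add, mul_assoc]

lemma rqPoch_self_add (q : ℝ) (m n : ℕ) :
    rqPoch q q (m + n) = rqPoch q q m * rqPoch (q ^ (m + 1)) q n := by
  rw [rqPoch_add, pow_succ']

lemma qPoch_ofReal (a q : ℝ) (k : ℕ) : qPoch a q k = rqPoch a q k := by
  simp [qPoch, rqPoch]

lemma qPochInf_zpow_eq_zero {q : ℂ} (hq : q ≠ 0) {n k : ℕ} (hk : k < n) :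
    qPochInf (q ^ (1 - n + k : ℤ)) q = 0 := by
  refine tprod_of_exists_eq_zero ⟨n - 1 - k, ?_⟩
  rw [← zpow_natCast, ← zpow_add₀ hq, show (1 - n + k : ℤ) + (n - 1 - k : ℕ) = 0 by omega,
    zpow_zero, sub_self]

section qPochhammer

variable {q : ℝ} (hq0 : 0 ≤ q) (hq1 : q < 1)
include hq0 hq1

lemma multipliable_one_sub_mul_pow (a : ℝ) : Multipliable fun j : ℕ => 1 - a * q ^ j := by
  simpa [sub_eq_add_neg] using
    Real.multipliable_one_add_of_summable ((summable_geometric_of_lt_one hq0 hq1).mul_left (-a))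

lemma qPochInf_ofReal (a : ℝ) : qPochInf a q = rqPochInf a q := by
  have h := (multipliable_one_sub_mul_pow hq0 hq1 a).hasProd.map Complex.ofRealHom
    Complex.continuous_ofReal
  simpa [qPochInf, rqPochInf, Function.comp_def] using h.tprod_eq

lemma rqPoch_pos {a : ℝ} (ha0 : 0 ≤ a) (ha1 : a < 1) (k : ℕ) : 0 < rqPoch a q k :=
  prod_pos fun j _ => by nlinarith [pow_le_one₀ hq0 hq1.le (n := j), pow_nonneg hq0 j]

lemma rqPochInf_nonneg {a : ℝ} (ha0 : 0 ≤ a) (ha1 : a ≤ 1) : 0 ≤ rqPochInf a q :=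
  tprod_nonneg fun j => by nlinarith [pow_le_one₀ hq0 hq1.le (n := j), pow_nonneg hq0 j]

lemma rqPochInf_le_rqPoch {a : ℝ} (ha0 : 0 ≤ a) (ha1 : a ≤ 1) (n : ℕ) :
    rqPochInf a q ≤ rqPoch a q n :=
  tprod_le_prod_range_of_le_one (multipliable_one_sub_mul_pow hq0 hq1 a)
    (fun j => by nlinarith [pow_le_one₀ hq0 hq1.le (n := j), pow_nonneg hq0 j])
    (fun j => by nlinarith [pow_nonneg hq0 j]) n

lemma rqPoch_neg_le_rqPochInf {c : ℝ} (hc : 0 ≤ c) (n : ℕ) :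
    rqPoch (-c) q n ≤ rqPochInf (-c) q :=
  prod_range_le_tprod_of_one_le (multipliable_one_sub_mul_pow hq0 hq1 (-c))
    (fun j => by nlinarith [pow_nonneg hq0 j]) n

lemma rqPochInf_pow_succ_div_rqPoch_le (m n : ℕ) :
    rqPochInf (q ^ (m + 1)) q / rqPoch q q (m + n) ≤ 1 / rqPoch q q m := by
  have hPm := rqPoch_pos hq0 hq1 hq0 hq1 m
  have hPn := rqPoch_pos hq0 hq1 (pow_nonneg hq0 (m + 1)) (pow_lt_one₀ hq0 hq1 (by omega)) n
  rw [rqPoch_self_add, div_le_div_iff₀ (by positivity) hPm, one_mul, mul_comm]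
  exact mul_le_mul_of_nonneg_left
    (rqPochInf_le_rqPoch hq0 hq1 (pow_nonneg hq0 _) (pow_le_one₀ hq0 hq1.le) n) hPm.le

lemma one_le_rqPochInf_neg {c : ℝ} (hc : 0 ≤ c) : 1 ≤ rqPochInf (-c) q := by
  simpa [rqPoch] using rqPoch_neg_le_rqPochInf hq0 hq1 hc 0

lemma norm_qPoch_le (a : ℂ) (k : ℕ) : ‖qPoch a q k‖ ≤ rqPochInf (-‖a‖) q := by
  refine (Finset.norm_prod_le _ _).trans
    (le_trans ?_ (rqPoch_neg_le_rqPochInf hq0 hq1 (norm_nonneg a) k))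
  exact prod_le_prod (fun j _ => norm_nonneg _) fun j _ =>
    (norm_sub_le _ _).trans (by simp [abs_of_nonneg hq0])

end qPochhammer

noncomputable def eulerCoeff (q : ℝ) (m : ℕ) : ℝ := q ^ m.choose 2 / rqPoch q q m

section Euler

variable {q : ℝ} (hq0 : 0 ≤ q) (hq1 : q < 1)
include hq0 hq1

lemma eulerCoeff_nonneg (m : ℕ) : 0 ≤ eulerCoeff q m :=
  div_nonneg (pow_nonneg hq0 _) (rqPoch_pos hq0 hq1 hq0 hq1 m).le

lemma eulerCoeff_succ_mul (m : ℕ) :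
    eulerCoeff q (m + 1) * (1 - q ^ (m + 1)) = eulerCoeff q m * q ^ m := by
  have hm := (rqPoch_pos hq0 hq1 hq0 hq1 m).ne'
  have hsucc : 1 - q * q ^ m ≠ 0 := by nlinarith [pow_le_one₀ hq0 hq1.le (n := m)]
  rw [eulerCoeff, eulerCoeff, rqPoch, prod_range_succ, ← rqPoch, Nat.choose_succ_succ',
    Nat.choose_one_right, pow_succ']
  field_simp
  ring

lemma one_add_mul_sum_eulerCoeff (x : ℝ) (N : ℕ) :
    (1 + x) * ∑ m ∈ range (N + 1), eulerCoeff q m * (q * x) ^ m =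
      ∑ m ∈ range (N + 1), eulerCoeff q m * x ^ m + eulerCoeff q N * q ^ N * x ^ (N + 1) := by
  induction N with
  | zero => simp [eulerCoeff, rqPoch]
  | succ N ih =>
    rw [sum_range_succ, sum_range_succ (fun m => eulerCoeff q m * x ^ m), mul_add, ih]
    linear_combination (-x ^ (N + 1)) * eulerCoeff_succ_mul hq0 hq1 N

lemma sum_eulerCoeff_le_mul {x : ℝ} (hx : 0 ≤ x) (N : ℕ) :
    ∑ m ∈ range (N + 1), eulerCoeff q m * x ^ m ≤
      (1 + x) * ∑ m ∈ range (N + 1), eulerCoeff q m * (q * x) ^ m := by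
  rw [one_add_mul_sum_eulerCoeff hq0 hq1]
  have := eulerCoeff_nonneg hq0 hq1 N
  exact le_add_of_nonneg_right (by positivity)

lemma sum_eulerCoeff_le_prod_mul {x : ℝ} (hx : 0 ≤ x) (N k : ℕ) :
    ∑ m ∈ range (N + 1), eulerCoeff q m * x ^ m ≤
      (∏ j ∈ range k, (1 + x * q ^ j)) *
        ∑ m ∈ range (N + 1), eulerCoeff q m * (q ^ k * x) ^ m := by
  induction k with
  | zero => simp
  | succ k ih =>
    refine ih.trans ?_
    rw [prod_range_succ, mul_assoc, pow_succ', mul_assoc q, mul_comm x (q ^ k)]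
    exact mul_le_mul_of_nonneg_left (sum_eulerCoeff_le_mul hq0 hq1 (by positivity) N)
      (prod_nonneg fun j _ => by positivity)

lemma sum_eulerCoeff_le_rqPochInf {x : ℝ} (hx : 0 ≤ x) (N : ℕ) :
    ∑ m ∈ range N, eulerCoeff q m * x ^ m ≤ rqPochInf (-x) q := by
  set G : ℝ → ℝ := fun y => ∑ m ∈ range (N + 1), eulerCoeff q m * y ^ m
  have hG0 : G 0 = 1 := by simp [G, sum_range_succ', eulerCoeff, rqPoch]
  have hlim : Tendsto (fun k => (∏ j ∈ range k, (1 + x * q ^ j)) * G (q ^ k * x)) atTop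
      (nhds (rqPochInf (-x) q * G 0)) := by
    refine Tendsto.mul ?_ ?_
    · simpa [rqPochInf] using (multipliable_one_sub_mul_pow hq0 hq1 (-x)).hasProd.tendsto_prod_nat
    · have hG : Continuous G := continuous_finsetSum _ fun m _ => by fun_prop
      refine (hG.tendsto 0).comp ?_
      simpa using (tendsto_pow_atTop_nhds_zero_of_lt_one hq0 hq1).mul_const x
  have hN : ∑ m ∈ range N, eulerCoeff q m * x ^ m ≤ G x := by
    simp only [G, sum_range_succ _ N]
    exact le_add_of_nonneg_right (mul_nonneg (eulerCoeff_nonneg hq0 hq1 N) (pow_nonneg hx N))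
  have hGx : G x ≤ rqPochInf (-x) q * G 0 :=
    ge_of_tendsto' hlim fun k => sum_eulerCoeff_le_prod_mul hq0 hq1 hx N k
  rw [hG0, mul_one] at hGx
  exact hN.trans hGx

lemma summable_eulerCoeff_mul_pow {x : ℝ} (hx : 0 ≤ x) :
    Summable fun m => eulerCoeff q m * x ^ m :=
  summable_of_sum_range_le (fun m => mul_nonneg (eulerCoeff_nonneg hq0 hq1 m) (pow_nonneg hx m))
    (sum_eulerCoeff_le_rqPochInf hq0 hq1 hx)

lemma tsum_eulerCoeff_mul_pow_le {x : ℝ} (hx : 0 ≤ x) :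
    ∑' m, eulerCoeff q m * x ^ m ≤ rqPochInf (-x) q :=
  Real.tsum_le_of_sum_range_le
    (fun m => mul_nonneg (eulerCoeff_nonneg hq0 hq1 m) (pow_nonneg hx m))
    (sum_eulerCoeff_le_rqPochInf hq0 hq1 hx)

end Euler

noncomputable def regPhi11Term (a : ℂ) (n : ℤ) (q : ℝ) (z : ℂ) (k : ℕ) : ℂ :=
  qPoch a q k * qPochInf ((q : ℂ) ^ (1 - n + (k : ℤ))) q / qPoch q q k *
    (-1) ^ k * z ^ k * (q : ℂ) ^ (k * (k - 1) / 2)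

lemma regPhi11_eq_tsum (a : ℂ) (n : ℤ) (q : ℝ) (z : ℂ) :
    regPhi11 a n q z = ∑' k, regPhi11Term a n q z k := rfl

lemma regPhi11Term_eq_zero {q : ℝ} (hq : q ≠ 0) (a z : ℂ) {n k : ℕ} (hk : k < n) :
    regPhi11Term a n q z k = 0 := by
  simp [regPhi11Term, qPochInf_zpow_eq_zero (Complex.ofReal_ne_zero.2 hq) hk]

lemma norm_regPhi11Term_le {q : ℝ} (hq0 : 0 < q) (hq1 : q < 1) (a z : ℂ) (n m : ℕ) :
    ‖regPhi11Term a n q z (m + n)‖ ≤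
      ‖z‖ ^ n * q ^ n.choose 2 * rqPochInf (-‖a‖) q * (eulerCoeff q m * ‖z‖ ^ m) := by
  have htail :
      qPochInf ((q : ℂ) ^ (1 - n + ((m + n : ℕ) : ℤ))) q = rqPochInf (q ^ (m + 1)) q := by
    rw [show (1 - n + ((m + n : ℕ) : ℤ)) = ((m + 1 : ℕ) : ℤ) by omega, zpow_natCast,
      ← qPochInf_ofReal hq0.le hq1, Complex.ofReal_pow]
  have hR := rqPochInf_nonneg hq0.le hq1 (pow_nonneg hq0.le (m + 1)) (pow_le_one₀ hq0.le hq1.le)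
  have hPm := rqPoch_pos hq0.le hq1 hq0.le hq1 m
  have hPmn := rqPoch_pos hq0.le hq1 hq0.le hq1 (m + n)
  have hA := one_le_rqPochInf_neg hq0.le hq1 (norm_nonneg a)
  have hexp : q ^ (m + n).choose 2 ≤ q ^ m.choose 2 * q ^ n.choose 2 := by
    rw [← pow_add, choose_two_add]
    exact pow_le_pow_of_le_one hq0.le hq1.le (Nat.le_add_right _ _)
  calc ‖regPhi11Term a n q z (m + n)‖
      = ‖qPoch a q (m + n)‖ * (rqPochInf (q ^ (m + 1)) q / rqPoch q q (m + n)) *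
          (‖z‖ ^ (m + n) * q ^ (m + n).choose 2) := by
        rw [regPhi11Term, htail, qPoch_ofReal, ← Nat.choose_two_right]
        simp [abs_of_nonneg hq0.le, abs_of_nonneg hR, abs_of_pos hPmn]
        ring
    _ ≤ rqPochInf (-‖a‖) q * (1 / rqPoch q q m) *
          (‖z‖ ^ (m + n) * (q ^ m.choose 2 * q ^ n.choose 2)) := by
        refine mul_le_mul (mul_le_mul (norm_qPoch_le hq0.le hq1 a (m + n))
          (rqPochInf_pow_succ_div_rqPoch_le hq0.le hq1 m n) (by positivity) (by positivity))
          (by gcongr) (by positivity) (by positivity)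
    _ = ‖z‖ ^ n * q ^ n.choose 2 * rqPochInf (-‖a‖) q * (eulerCoeff q m * ‖z‖ ^ m) := by
        rw [eulerCoeff, pow_add]
        ring

/-- `|f(n,a,z)| ≤ |z|^n q^{n(n-1)/2} (-q;q)_∞ (-|a|;q)_∞ (-|z|;q)_∞`. -/
theorem regPhi11_bound (q : ℝ) (hq0 : 0 < q) (hq1 : q < 1) (n : ℕ) (a z : ℂ) :
    ‖regPhi11 a (n : ℤ) q z‖ ≤
      ‖z‖ ^ n * q ^ (n * (n - 1) / 2) *
        (rqPochInf (-q) q * rqPochInf (-‖a‖) q *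
          rqPochInf (-‖z‖) q) := by
  have hA := one_le_rqPochInf_neg hq0.le hq1 (norm_nonneg a)
  have hQ := one_le_rqPochInf_neg hq0.le hq1 hq0.le
  have hZ := one_le_rqPochInf_neg hq0.le hq1 (norm_nonneg z)
  rw [regPhi11_eq_tsum, ← Nat.choose_two_right]
  calc ‖∑' k, regPhi11Term a n q z k‖
      ≤ ‖z‖ ^ n * q ^ n.choose 2 * rqPochInf (-‖a‖) q *
          ∑' m, eulerCoeff q m * ‖z‖ ^ m :=
        norm_tsum_le_of_nat_add (fun k hk => regPhi11Term_eq_zero hq0.ne' a z hk)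
          ((summable_eulerCoeff_mul_pow hq0.le hq1 (norm_nonneg z)).hasSum.mul_left _)
          (norm_regPhi11Term_le hq0 hq1 a z n)
    _ ≤ ‖z‖ ^ n * q ^ n.choose 2 * (1 * rqPochInf (-‖a‖) q * rqPochInf (-‖z‖) q) := by
        rw [one_mul, ← mul_assoc]
        gcongr
        exact tsum_eulerCoeff_mul_pow_le hq0.le hq1 (norm_nonneg z)
    _ ≤ _ := by gcongr
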